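/- For a trim lattice L, the downward label sets are exactly the independent sets of the Galois graph G(L): a subset S ⊆ [n] equals D^γ(x) for some x ∈ L if and only if no two elements of S are joined by an edge of G(L). In particular |L| equals the number of independent sets of G(L). -/

import Mathlib

/-- An element `x` of a lattice is *left modular* if `(y ⊔ x) ⊓ z = y ⊔ (x ⊓ z)`
for all `y ≤ z`. -/
def LeftModular {L : Type*} [Lattice L] (x : L) : Prop :=
  ∀ y z : L, y ≤ z → (y ⊔ x) ⊓ z = y ⊔ (x ⊓ z)

/-- The data of an extremal lattice of length `n` together with a fixed
maximal-length chain `x₀ ⋖ ⋯ ⋖ xₙ` and the induced numberings of the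
join-irreducibles `j₁, …, jₙ` and meet-irreducibles `m₁, …, mₙ`. -/
structure ExtremalChainData (L : Type*) [Lattice L] [Fintype L] [BoundedOrder L]
    (n : ℕ) where
  x : Fin (n + 1) → L
  x_strictMono : StrictMono x
  x_bot : x 0 = ⊥
  x_top : x (Fin.last n) = ⊤
  maxlen : ∀ (m : ℕ) (c : Fin (m + 1) → L), StrictMono c → m ≤ n
  j : Fin n → L
  m : Fin n → L
  j_irr : ∀ i, SupIrred (j i)
  m_irr : ∀ i, InfIrred (m i)
  j_inj : Function.Injective j
  m_inj : Function.Injective m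
  j_surj : ∀ a : L, SupIrred a → a ∈ Set.range j
  m_surj : ∀ a : L, InfIrred a → a ∈ Set.range m
  x_eq_sup : ∀ i : Fin (n + 1),
    x i = (Finset.univ.filter fun k : Fin n => (k : ℕ) < (i : ℕ)).sup j
  x_eq_inf : ∀ i : Fin (n + 1),
    x i = (Finset.univ.filter fun k : Fin n => (i : ℕ) ≤ (k : ℕ)).inf m

namespace ExtremalChainData

variable {L : Type*} [Lattice L] [Fintype L] [BoundedOrder L] {n : ℕ}

/-- `x_J`: the set of indices of join-irreducibles lying below `a`. -/
def setJ (D : ExtremalChainData L n) (a : L) : Set (Fin n) := {i | D.j i ≤ a}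

/-- `x_M`: the set of indices of meet-irreducibles lying above `a`. -/
def setM (D : ExtremalChainData L n) (a : L) : Set (Fin n) := {i | a ≤ D.m i}

/-- The Galois graph: a directed edge `i → k` when `jᵢ ≰ m_k` and `i ≠ k`. -/
def galoisEdge (D : ExtremalChainData L n) (i k : Fin n) : Prop :=
  ¬ D.j i ≤ D.m k ∧ i ≠ k

/-- The left modular labelling: `i` is the label of the cover `y ⋖ z` iff `i` is
minimal with `y ⊔ (xᵢ ⊓ z) = z`. -/
def IsLabel (D : ExtremalChainData L n) (y z : L) (i : Fin n) : Prop :=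
  y ⊔ (D.x i.succ ⊓ z) = z ∧ ∀ k : Fin n, y ⊔ (D.x k.succ ⊓ z) = z → i ≤ k

open scoped Classical in
/-- `D^γ(a)`: the set of labels of cover relations below `a`. -/
noncomputable def downLabels (D : ExtremalChainData L n) (a : L) : Finset (Fin n) :=
  Finset.univ.filter fun i => ∃ y, y ⋖ a ∧ D.IsLabel y a i

open scoped Classical in
/-- `U^γ(a)`: the set of labels of cover relations above `a`. -/
noncomputable def upLabels (D : ExtremalChainData L n) (a : L) : Finset (Fin n) :=
  Finset.univ.filter fun i => ∃ z, a ⋖ z ∧ D.IsLabel a z i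

/-- The fixed chain consists of left modular elements, i.e. the lattice is trim. -/
def IsTrim (D : ExtremalChainData L n) : Prop := ∀ i, LeftModular (D.x i)

end ExtremalChainData

/-!
Left modularity of the chain shows that the label `i` of a cover `y ⋖ z` is the unique index
with `jᵢ ≤ z`, `jᵢ ≰ y` and `y ≤ mᵢ`. Hence the downward labels of `a` are the indices `i` with
`jᵢ ≤ a` and `mᵢ ⊓ a ⋖ a`, and they join to `a`, so `a ↦ D^γ(a)` is injective.

That `D^γ(w)` is independent is proved by induction on `w`. Let `i` be the largest tail of an
edge `i → k` inside `D^γ(w)`, and `y = mₖ ⊓ w`. Since `y ⋖ w` is labelled `k ≠ i`, `y ≰ mᵢ`, so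
some label `q > i` of `y` has `j_q ≰ mᵢ`. A zigzag between `D^γ(y)` (independent by induction)
and `D^γ(w)`, along strictly increasing indices, shows that every label of `y` above `i` is a
label of `w`; so `q → i` is an edge of `D^γ(w)` whose tail exceeds `i`.

Conversely an independent set `S` is `D^γ(⋁_{i ∈ S} jᵢ)`, by a similar descending induction.
-/

section CovBy

variable {α : Type*} [Lattice α] {a b c : α}

lemma CovBy.sup_eq_of_not_le (h : a ⋖ b) (hcb : c ≤ b) (hca : ¬ c ≤ a) : a ⊔ c = b :=
  (h.eq_or_eq le_sup_left (sup_le h.le hcb)).resolve_left fun h' => hca (le_sup_right.trans h'.le)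

lemma CovBy.inf_eq_of_not_le (h : a ⋖ b) (hac : a ≤ c) (hbc : ¬ b ≤ c) : c ⊓ b = a :=
  (h.eq_or_eq (le_inf hac h.le) inf_le_right).resolve_right fun h' => hbc (h'.ge.trans inf_le_left)

end CovBy

namespace ExtremalChainData

variable {L : Type*} [Lattice L] [Fintype L] [BoundedOrder L] {n : ℕ} (D : ExtremalChainData L n)
  {i k : Fin n} {a b y z : L}

lemma j_le_x {s : Fin (n + 1)} (h : (i : ℕ) < s) : D.j i ≤ D.x s := by
  rw [D.x_eq_sup s]
  exact Finset.le_sup (by simpa using h)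

lemma x_le_m {s : Fin (n + 1)} (h : (s : ℕ) ≤ k) : D.x s ≤ D.m k := by
  rw [D.x_eq_inf s]
  exact Finset.inf_le (by simpa using h)

lemma j_le_m_of_lt (h : i < k) : D.j i ≤ D.m k :=
  (D.j_le_x (s := k.castSucc) h).trans (D.x_le_m le_rfl)

lemma le_of_not_j_le_m (h : ¬ D.j i ≤ D.m k) : k ≤ i :=
  not_lt.mp (mt D.j_le_m_of_lt h)

lemma x_succ_le_sup_j (i : Fin n) : D.x i.succ ≤ D.x i.castSucc ⊔ D.j i := by
  rw [D.x_eq_sup i.succ]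
  refine Finset.sup_le fun l hl => ?_
  rcases Nat.lt_succ_iff_lt_or_eq.mp (by simpa using hl : (l : ℕ) < i + 1) with hl | hl
  · exact le_sup_of_le_left (D.j_le_x hl)
  · obtain rfl : l = i := Fin.ext hl
    exact le_sup_right

lemma m_inf_x_succ_le (i : Fin n) : D.m i ⊓ D.x i.succ ≤ D.x i.castSucc := by
  rw [D.x_eq_inf i.castSucc]
  refine Finset.le_inf fun l hl => ?_
  rcases (by simpa using hl : (i : ℕ) ≤ l).eq_or_lt with hl | hl
  · obtain rfl : i = l := Fin.ext hl
    exact inf_le_left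
  · exact inf_le_right.trans (D.x_le_m (by simpa using hl))

lemma not_j_le_m_self (i : Fin n) : ¬ D.j i ≤ D.m i := fun h =>
  (D.x_strictMono (Fin.castSucc_lt_succ (i := i))).not_ge <|
    (le_inf ((D.x_succ_le_sup_j i).trans (sup_le (D.x_le_m le_rfl) h)) le_rfl).trans
      (D.m_inf_x_succ_le i)

lemma lt_of_j_le_x {s : Fin (n + 1)} (h : D.j i ≤ D.x s) : (i : ℕ) < s :=
  not_le.mp fun hs => D.not_j_le_m_self i (h.trans (D.x_le_m hs))

lemma le_of_x_le_m {s : Fin (n + 1)} (h : D.x s ≤ D.m k) : (s : ℕ) ≤ k :=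
  not_lt.mp fun hs => D.not_j_le_m_self k ((D.j_le_x hs).trans h)

lemma exists_j_le_not_le (h : ¬ a ≤ b) : ∃ i, D.j i ≤ a ∧ ¬ D.j i ≤ b := by
  obtain ⟨s, rfl, hs⟩ := exists_supIrred_decomposition a
  obtain ⟨c, hc, hcb⟩ : ∃ c ∈ s, ¬ c ≤ b := by simpa [Finset.sup_le_iff] using h
  obtain ⟨i, rfl⟩ := D.j_surj c (hs hc)
  exact ⟨i, Finset.le_sup (f := id) hc, hcb⟩

lemma exists_le_m_not_le (h : ¬ a ≤ b) : ∃ k, b ≤ D.m k ∧ ¬ a ≤ D.m k := by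
  obtain ⟨s, rfl, hs⟩ := exists_infIrred_decomposition b
  obtain ⟨c, hc, hac⟩ : ∃ c ∈ s, ¬ a ≤ c := by simpa [Finset.le_inf_iff] using h
  obtain ⟨k, rfl⟩ := D.m_surj c (hs hc)
  exact ⟨k, Finset.inf_le (f := id) hc, hac⟩

section IsLabel

variable {D}

lemma IsLabel.x_castSucc_inf_le (hl : D.IsLabel y z i) (hc : y ⋖ z) :
    D.x i.castSucc ⊓ z ≤ y := by
  rcases Fin.eq_zero_or_eq_succ i.castSucc with h0 | ⟨l, hli⟩
  · simp [h0, D.x_bot]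
  · by_contra h
    have hil : (i : ℕ) ≤ l := hl.2 l (hli ▸ hc.sup_eq_of_not_le inf_le_right h)
    have : (i : ℕ) = l + 1 := by simpa using congrArg Fin.val hli
    omega

lemma IsLabel.j_le (hl : D.IsLabel y z i) (hc : y ⋖ z) : D.j i ≤ z := by
  have hnm : ¬ D.x i.succ ⊓ z ≤ D.m i := fun h => hc.lt.ne' <| by
    have : D.x i.succ ⊓ z ≤ y :=
      (le_inf ((le_inf h inf_le_left).trans (D.m_inf_x_succ_le i)) inf_le_right).trans
        (hl.x_castSucc_inf_le hc)
    exact hl.1.symm.trans (sup_eq_left.mpr this)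
  obtain ⟨l, hlx, hlm⟩ := D.exists_j_le_not_le hnm
  obtain rfl : l = i := le_antisymm
    (Fin.le_iff_val_le_val.mpr (by simpa using D.lt_of_j_le_x (hlx.trans inf_le_left)))
    (D.le_of_not_j_le_m hlm)
  exact hlx.trans inf_le_right

/-- Left modularity of `x i.castSucc` enters here: `(y ⊔ x i.castSucc) ⊓ z = y`. -/
lemma IsLabel.not_j_le_sup_x (hD : D.IsTrim) (hl : D.IsLabel y z i) (hc : y ⋖ z) :
    ¬ D.j i ≤ y ⊔ D.x i.castSucc := fun h => hc.lt.ne' <| by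
  have hz : z ≤ y ⊔ D.x i.castSucc :=
    calc z = y ⊔ (D.x i.succ ⊓ z) := hl.1.symm
      _ ≤ y ⊔ D.x i.succ := sup_le_sup_left inf_le_left _
      _ ≤ y ⊔ D.x i.castSucc :=
        sup_le le_sup_left ((D.x_succ_le_sup_j i).trans (sup_le le_sup_right h))
  calc z = (y ⊔ D.x i.castSucc) ⊓ z := (inf_eq_right.mpr hz).symm
    _ = y := by rw [hD _ y z hc.le, sup_eq_left.mpr (hl.x_castSucc_inf_le hc)]

lemma IsLabel.not_j_le (hD : D.IsTrim) (hl : D.IsLabel y z i) (hc : y ⋖ z) : ¬ D.j i ≤ y :=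
  fun h => hl.not_j_le_sup_x hD hc (le_sup_of_le_left h)

lemma IsLabel.le_m (hD : D.IsTrim) (hl : D.IsLabel y z i) (hc : y ⋖ z) : y ≤ D.m i := by
  obtain ⟨k, hk, hik⟩ := D.exists_le_m_not_le (hl.not_j_le_sup_x hD hc)
  obtain rfl : k = i := le_antisymm (D.le_of_not_j_le_m hik)
    (Fin.le_iff_val_le_val.mpr (by simpa using D.le_of_x_le_m (le_sup_right.trans hk)))
  exact le_sup_left.trans hk

end IsLabel

lemma m_inf_eq (hc : y ⋖ z) (hym : y ≤ D.m i) (hjz : D.j i ≤ z) : D.m i ⊓ z = y :=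
  hc.inf_eq_of_not_le hym fun h => D.not_j_le_m_self i (hjz.trans h)

lemma le_of_covBy (hc : y ⋖ z) (hiz : D.j i ≤ z) (hiy : ¬ D.j i ≤ y) (hkz : D.j k ≤ z)
    (hkm : y ≤ D.m k) : k ≤ i :=
  D.le_of_not_j_le_m fun h => hiy ((le_inf h hiz).trans (D.m_inf_eq hc hkm hkz).le)

lemma exists_isLabel (hc : y ⋖ z) : ∃ i, D.IsLabel y z i := by
  classical
  obtain ⟨l, hlz, hly⟩ := D.exists_j_le_not_le hc.lt.not_ge
  have hl : y ⊔ (D.x l.succ ⊓ z) = z := hc.sup_eq_of_not_le inf_le_right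
    fun h => hly ((le_inf (D.j_le_x (by simp)) hlz).trans h)
  have hne : (Finset.univ.filter fun k : Fin n => y ⊔ (D.x k.succ ⊓ z) = z).Nonempty :=
    ⟨l, by simpa using hl⟩
  exact ⟨_, (Finset.mem_filter.mp (Finset.min'_mem _ hne)).2,
    fun k hk => Finset.min'_le _ _ (by simpa using hk)⟩

lemma isLabel_iff (hD : D.IsTrim) (hc : y ⋖ z) :
    D.IsLabel y z i ↔ D.j i ≤ z ∧ ¬ D.j i ≤ y ∧ y ≤ D.m i := by
  refine ⟨fun hl => ⟨hl.j_le hc, hl.not_j_le hD hc, hl.le_m hD hc⟩,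
    fun ⟨hiz, hiy, him⟩ => ?_⟩
  obtain ⟨l, hl⟩ := D.exists_isLabel hc
  obtain rfl : l = i := le_antisymm
    (D.le_of_covBy hc hiz hiy (hl.j_le hc) (hl.le_m hD hc))
    (D.le_of_covBy hc (hl.j_le hc) (hl.not_j_le hD hc) hiz him)
  exact hl

lemma mem_downLabels : i ∈ D.downLabels a ↔ ∃ y, y ⋖ a ∧ D.IsLabel y a i := by
  simp [downLabels]

lemma j_le_of_mem_downLabels (h : i ∈ D.downLabels a) : D.j i ≤ a := by
  obtain ⟨y, hc, hl⟩ := D.mem_downLabels.mp h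
  exact hl.j_le hc

lemma mem_downLabels_iff (hD : D.IsTrim) :
    i ∈ D.downLabels a ↔ D.j i ≤ a ∧ D.m i ⊓ a ⋖ a := by
  rw [mem_downLabels]
  constructor
  · rintro ⟨y, hc, hl⟩
    rw [D.m_inf_eq hc (hl.le_m hD hc) (hl.j_le hc)]
    exact ⟨hl.j_le hc, hc⟩
  · rintro ⟨hj, hc⟩
    exact ⟨_, hc, (D.isLabel_iff hD hc).mpr
      ⟨hj, fun h => D.not_j_le_m_self i (h.trans inf_le_left), inf_le_left⟩⟩

lemma exists_mem_downLabels_not_j_le (hD : D.IsTrim) (h : ¬ a ≤ b) :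
    ∃ p ∈ D.downLabels a, ¬ D.j p ≤ b := by
  obtain ⟨y, hby, hc⟩ := exists_le_covBy_of_lt
    (inf_le_right.lt_of_ne fun h' => h (h'.ge.trans inf_le_left) : b ⊓ a < a)
  obtain ⟨p, hp⟩ := D.exists_isLabel hc
  exact ⟨p, D.mem_downLabels.mpr ⟨y, hc, hp⟩,
    fun h' => hp.not_j_le hD hc ((le_inf h' (hp.j_le hc)).trans hby)⟩

lemma sup_downLabels (hD : D.IsTrim) (a : L) : (D.downLabels a).sup D.j = a := by
  refine le_antisymm (Finset.sup_le fun _ => D.j_le_of_mem_downLabels) (by_contra fun h => ?_)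
  obtain ⟨p, hp, hpb⟩ := D.exists_mem_downLabels_not_j_le hD h
  exact hpb (Finset.le_sup hp)

lemma downLabels_injective (hD : D.IsTrim) : Function.Injective D.downLabels := fun a b h => by
  rw [← D.sup_downLabels hD a, h, D.sup_downLabels hD b]

lemma exists_mem_downLabels_gt (hD : D.IsTrim) (hj : D.j i ≤ a) (hi : i ∉ D.downLabels a) :
    ∃ p ∈ D.downLabels a, i < p ∧ ¬ D.j p ≤ D.m i := by
  obtain ⟨p, hp, hpi⟩ :=
    D.exists_mem_downLabels_not_j_le hD fun h => D.not_j_le_m_self i (hj.trans h)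
  exact ⟨p, hp, (D.le_of_not_j_le_m hpi).lt_of_ne fun h => hi (h ▸ hp), hpi⟩

/-- Independence in the Galois graph: no edge `i → k` between distinct elements of `S`. -/
def IsIndependent (S : Finset (Fin n)) : Prop :=
  (S : Set (Fin n)).Pairwise fun i k => D.j i ≤ D.m k

lemma isIndependent_iff {S : Finset (Fin n)} : D.IsIndependent S ↔
    ∀ i ∈ S, ∀ k ∈ S, i ≠ k → ¬ D.galoisEdge i k ∧ ¬ D.galoisEdge k i := by
  refine ⟨fun h i hi k hk hik =>
      ⟨fun e => e.1 (h hi hk hik), fun e => e.1 (h hk hi hik.symm)⟩,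
    fun h i hi k hk hik => by_contra fun hjm => (h i hi k hk hik).1 ⟨hjm, hik⟩⟩

lemma mem_downLabels_of_mem_downLabels_of_lt (hD : D.IsTrim) (hya : y ≤ a)
    (hy : D.IsIndependent (D.downLabels y))
    (hjy : ∀ s ∈ D.downLabels a, i < s → D.j s ≤ y)
    (hfree : ∀ s ∈ D.downLabels a, i < s →
      ∀ t ∈ D.downLabels a, t ≠ s → D.j s ≤ D.m t)
    (p : Fin n) (hp : p ∈ D.downLabels y) (hip : i < p) : p ∈ D.downLabels a := by
  induction p using WellFoundedGT.induction with | ind p IH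
  by_contra hpa
  obtain ⟨s, hs, hps, hsp⟩ :=
    D.exists_mem_downLabels_gt hD ((D.j_le_of_mem_downLabels hp).trans hya) hpa
  have hsy : s ∉ D.downLabels y := fun hs' => hsp (hy hs' hp hps.ne')
  obtain ⟨p', hp', hsp', hp's⟩ := D.exists_mem_downLabels_gt hD (hjy s hs (hip.trans hps)) hsy
  exact hp's (hfree p' (IH p' (hps.trans hsp') hp' (hip.trans (hps.trans hsp')))
    (hip.trans (hps.trans hsp')) s hs hsp'.ne)

theorem isIndependent_downLabels (hD : D.IsTrim) (a : L) : D.IsIndependent (D.downLabels a) := by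
  classical
  induction a using WellFoundedLT.induction with | ind w IH
  by_contra hw
  set T := (D.downLabels w).filter fun s => ∃ t ∈ D.downLabels w, t ≠ s ∧ ¬ D.j s ≤ D.m t
  have hT : T.Nonempty := by
    simp only [IsIndependent, Set.Pairwise, not_forall] at hw
    obtain ⟨i, hi, k, hk, hik, hjm⟩ := hw
    exact ⟨i, Finset.mem_filter.mpr ⟨hi, k, hk, hik.symm, hjm⟩⟩
  obtain ⟨i, hiT, hmax⟩ := T.exists_max_image id hT
  obtain ⟨hi, k, hk, hki, hik⟩ := Finset.mem_filter.mp hiT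
  have hfree : ∀ s ∈ D.downLabels w, i < s →
      ∀ t ∈ D.downLabels w, t ≠ s → D.j s ≤ D.m t :=
    fun s hs his t ht hts => by_contra fun h =>
      (hmax s (Finset.mem_filter.mpr ⟨hs, t, ht, hts, h⟩)).not_gt his
  have hk_lt : k < i := (D.le_of_not_j_le_m hik).lt_of_ne hki
  obtain ⟨hkw, hyw⟩ := (D.mem_downLabels_iff hD).mp hk
  set y := D.m k ⊓ w
  have hjy : ∀ s ∈ D.downLabels w, i < s → D.j s ≤ y := fun s hs his =>
    le_inf (hfree s hs his k hk (hk_lt.trans his).ne) (D.j_le_of_mem_downLabels hs)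
  have hiy : ¬ D.j i ≤ y := fun h => hik (h.trans inf_le_left)
  have hym : ¬ y ≤ D.m i := fun h => hk_lt.not_ge <| D.le_of_covBy hyw hkw
    (fun h' => D.not_j_le_m_self k (h'.trans inf_le_left)) (D.j_le_of_mem_downLabels hi) h
  obtain ⟨q, hq, hqi⟩ := D.exists_mem_downLabels_not_j_le hD hym
  have hiq : i < q :=
    (D.le_of_not_j_le_m hqi).lt_of_ne fun h => hiy (h ▸ D.j_le_of_mem_downLabels hq)
  exact hqi (hfree q (D.mem_downLabels_of_mem_downLabels_of_lt hD hyw.le (IH y hyw.lt) hjy hfree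
    q hq hiq) hiq i hi hiq.ne)

lemma downLabels_sup_j_subset (hD : D.IsTrim) {S : Finset (Fin n)} (hS : D.IsIndependent S) :
    D.downLabels (S.sup D.j) ⊆ S := by
  intro p hp
  induction p using WellFoundedGT.induction with | ind p IH
  by_contra hpS
  obtain ⟨l, hl, hlp⟩ : ∃ l ∈ S, ¬ D.j l ≤ D.m p := by
    simpa [Finset.sup_le_iff] using
      fun h => D.not_j_le_m_self p ((D.j_le_of_mem_downLabels hp).trans h)
  have hpl : p < l := (D.le_of_not_j_le_m hlp).lt_of_ne fun h => hpS (h ▸ hl)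
  by_cases hlD : l ∈ D.downLabels (S.sup D.j)
  · exact hlp (D.isIndependent_downLabels hD _ hlD hp hpl.ne')
  · obtain ⟨p', hp', hlp', hp'l⟩ := D.exists_mem_downLabels_gt hD (Finset.le_sup hl) hlD
    exact hp'l (hS (IH p' (hpl.trans hlp') hp') hl hlp'.ne')

lemma downLabels_sup_j (hD : D.IsTrim) {S : Finset (Fin n)} (hS : D.IsIndependent S) :
    D.downLabels (S.sup D.j) = S := by
  refine (D.downLabels_sup_j_subset hD hS).antisymm fun i hi => ?_
  obtain ⟨p, hp, hpi⟩ := D.exists_mem_downLabels_not_j_le hD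
    fun h => D.not_j_le_m_self i ((Finset.le_sup hi).trans h)
  obtain rfl : p = i := by_contra fun hne =>
    hpi (hS (D.downLabels_sup_j_subset hD hS hp) hi hne)
  exact hp

end ExtremalChainData

open scoped Classical in
/-- In a trim lattice, the downward label sets are exactly the independent sets
of the Galois graph (directions ignored); in particular the number of elements
of `L` equals the number of independent sets of `G(L)`. -/
theorem down_labels_eq_independent_sets {L : Type*} [Lattice L] [Fintype L]
    [BoundedOrder L] {n : ℕ} (D : ExtremalChainData L n) (hD : D.IsTrim) :
    (∀ S : Finset (Fin n), (∃ a : L, D.downLabels a = S) ↔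
      (∀ i ∈ S, ∀ k ∈ S, i ≠ k → ¬ D.galoisEdge i k ∧ ¬ D.galoisEdge k i)) ∧
    Fintype.card L = (Finset.univ.filter fun S : Finset (Fin n) =>
      ∀ i ∈ S, ∀ k ∈ S, i ≠ k → ¬ D.galoisEdge i k ∧ ¬ D.galoisEdge k i).card := by
  have key : ∀ S : Finset (Fin n), (∃ a : L, D.downLabels a = S) ↔
      (∀ i ∈ S, ∀ k ∈ S, i ≠ k → ¬ D.galoisEdge i k ∧ ¬ D.galoisEdge k i) := by
    intro S
    rw [← D.isIndependent_iff]
    exact ⟨fun ⟨a, ha⟩ => ha ▸ D.isIndependent_downLabels hD a,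
      fun hS => ⟨S.sup D.j, D.downLabels_sup_j hD hS⟩⟩
  refine ⟨key, ?_⟩
  rw [← Finset.card_univ, ← Finset.card_image_of_injective _ (D.downLabels_injective hD)]
  congr 1
  ext S
  simpa using key S
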